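/- Let Q be a finite group, G a Q-group, and M an abelian group regarded as a Q-G module with trivial G- and Q-actions, such that |Q| is invertible in M. Then for every n ≥ 0 there is an isomorphism HH^n_Q(G, M) ≅ H^n_Q(G, M), where H^n_Q(G, M) = H^n(Hom(C_*(G)^Q, M)) is Knudson's cohomology of invariant group chains. -/

import Mathlib

namespace InvariantCohomology

noncomputable section

/-- The `i`-th inner face of an inhomogeneous `(n+1)`-tuple: multiply the `i`-th and
`(i+1)`-st entries. -/
def fm {G : Type*} [Group G] {n : ℕ} (g : Fin (n + 1) → G) (i : Fin n) : Fin n → G :=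
  fun j =>
    if (j : ℕ) < (i : ℕ) then g j.castSucc
    else if j = i then g i.castSucc * g i.succ
    else g j.succ

variable (G Q M : Type*) [Group G] [Group Q] [MulDistribMulAction Q G]
  [AddCommGroup M] [DistribMulAction G M] [DistribMulAction Q M]

/-- Inhomogeneous `n`-cochains of `G` with values in `M`. -/
abbrev Cc (n : ℕ) : Type _ := (Fin n → G) → M

/-- The differential of the inhomogeneous cochain complex:
`(δf)(g₁,…,g_{n+1}) = g₁ • f(g₂,…,g_{n+1}) + ∑ᵢ (-1)ⁱ f(g₁,…,gᵢgᵢ₊₁,…,g_{n+1})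
  + (-1)^{n+1} f(g₁,…,gₙ)`. -/
def cb (n : ℕ) : Cc G M n →+ Cc G M (n + 1) where
  toFun f := fun g =>
    g 0 • f (Fin.tail g)
      + ∑ i : Fin n, ((-1 : ℤ) ^ ((i : ℕ) + 1)) • f (fm g i)
      + ((-1 : ℤ) ^ (n + 1)) • f (Fin.init g)
  map_zero' := by funext g; simp
  map_add' f₁ f₂ := by
    funext g
    simp only [Pi.add_apply, smul_add, Finset.sum_add_distrib]
    abel

/-- The differential, re-indexed as a map `Cⁿ⁻¹ → Cⁿ` (zero for `n = 0`). -/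
def cdd : ∀ n : ℕ, Cc G M (n - 1) →+ Cc G M n
  | 0 => 0
  | n + 1 => cb G M n

/-- The action of `q : Q` on cochains, `(q • f)(g₁,…,gₙ) = q • f(q⁻¹g₁,…,q⁻¹gₙ)`. -/
def qcc (q : Q) (n : ℕ) : Cc G M n →+ Cc G M n where
  toFun f := fun g => q • f (q⁻¹ • g)
  map_zero' := by funext g; simp
  map_add' f₁ f₂ := by funext g; simp [smul_add]

/-- The subgroup of `Q`-invariant cochains. -/
def invCc (n : ℕ) : AddSubgroup (Cc G M n) where
  carrier := { f | ∀ q : Q, qcc G Q M q n f = f }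
  add_mem' := by intro a b ha hb q; rw [map_add, ha q, hb q]
  zero_mem' := fun q => map_zero _
  neg_mem' := by intro a ha q; rw [map_neg, ha q]

/-- Invariant cocycles. -/
def ccycQ (n : ℕ) : AddSubgroup (Cc G M n) := (cb G M n).ker ⊓ invCc G Q M n

/-- Coboundaries of invariant cochains. -/
def cbdryQ (n : ℕ) : AddSubgroup (Cc G M n) := (invCc G Q M (n - 1)).map (cdd G M n)

/-- The invariant cohomology `HHⁿ_Q(G, M)`: the cohomology of the subcomplex of
`Q`-invariant cochains. -/
def HHQ (n : ℕ) : Type _ := ccycQ G Q M n ⧸ ((cbdryQ G Q M n).addSubgroupOf (ccycQ G Q M n))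

instance (n : ℕ) : AddCommGroup (HHQ G Q M n) := QuotientAddGroup.Quotient.addCommGroup _

end

end InvariantCohomology



open Finsupp

namespace InvariantHomology

noncomputable section

/-- Inhomogeneous `n`-chains of `G` with coefficients in the abelian group `A`
(with trivial action): the free `A`-span of `n`-tuples of elements of `G`. -/
abbrev Ch (G A : Type*) [AddCommGroup A] (n : ℕ) : Type _ := (Fin n → G) →₀ A

/-- The `i`-th inner face of an inhomogeneous `(n+1)`-tuple: multiply the `i`-th and
`(i+1)`-st entries. -/
def fm {G : Type*} [Group G] {n : ℕ} (g : Fin (n + 1) → G) (i : Fin n) : Fin n → G :=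
  fun j =>
    if (j : ℕ) < (i : ℕ) then g j.castSucc
    else if j = i then g i.castSucc * g i.succ
    else g j.succ

variable (G A : Type*) [Group G] [AddCommGroup A]

/-- The differential of the bar complex (with trivial coefficients):
`d[g₁|⋯|g_{n+1}] = [g₂|⋯|g_{n+1}] + ∑ᵢ (-1)ⁱ [g₁|⋯|gᵢgᵢ₊₁|⋯|g_{n+1}] + (-1)^{n+1} [g₁|⋯|gₙ]`. -/
def bd (n : ℕ) : Ch G A (n + 1) →+ Ch G A n :=
  Finsupp.liftAddHom fun g =>
    (Finsupp.singleAddHom (Fin.tail g) : A →+ Ch G A n)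
      + ∑ i : Fin n, ((-1 : ℤ) ^ ((i : ℕ) + 1)) • (Finsupp.singleAddHom (fm g i) : A →+ Ch G A n)
      + ((-1 : ℤ) ^ (n + 1)) • (Finsupp.singleAddHom (Fin.init g) : A →+ Ch G A n)

/-- The differential, re-indexed as a map `Cₙ → C_{n-1}` (zero for `n = 0`). -/
def dd : ∀ n : ℕ, Ch G A n →+ Ch G A (n - 1)
  | 0 => 0
  | n + 1 => bd G A n

/-- Cycles. -/
def cyc (n : ℕ) : AddSubgroup (Ch G A n) := (dd G A n).ker

/-- Boundaries. -/
def bdry (n : ℕ) : AddSubgroup (Ch G A n) := (bd G A n).range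

/-- The group homology `Hₙ(G, A)` with trivial coefficients, computed from the bar complex. -/
def Hn (n : ℕ) : Type _ := cyc G A n ⧸ ((bdry G A n).addSubgroupOf (cyc G A n))

instance (n : ℕ) : AddCommGroup (Hn G A n) :=
  QuotientAddGroup.Quotient.addCommGroup _

variable (Q : Type*) [Group Q] [MulDistribMulAction Q G]

/-- The action of `q : Q` on chains, `q • [g₁|⋯|gₙ] = [q g₁|⋯|q gₙ]`. -/
def qch (q : Q) (n : ℕ) : Ch G A n →+ Ch G A n :=
  Finsupp.mapDomain.addMonoidHom fun g : Fin n → G => q • g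

/-- The subgroup of `Q`-invariant chains. -/
def invCh (n : ℕ) : AddSubgroup (Ch G A n) where
  carrier := { x | ∀ q : Q, qch G A Q q n x = x }
  add_mem' := by intro a b ha hb q; rw [map_add, ha q, hb q]
  zero_mem' := fun q => map_zero _
  neg_mem' := by intro a ha q; rw [map_neg, ha q]

/-- Invariant cycles. -/
def cycQ (n : ℕ) : AddSubgroup (Ch G A n) := cyc G A n ⊓ invCh G A Q n

/-- Boundaries of invariant chains. -/
def bdryQ (n : ℕ) : AddSubgroup (Ch G A n) := (invCh G A Q (n + 1)).map (bd G A n)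

/-- The homology `Hₙ^Q(G, A)` of the subcomplex of `Q`-invariant chains. -/
def HQ (n : ℕ) : Type _ := cycQ G A Q n ⧸ ((bdryQ G A Q n).addSubgroupOf (cycQ G A Q n))

instance (n : ℕ) : AddCommGroup (HQ G A Q n) :=
  QuotientAddGroup.Quotient.addCommGroup _

/-- The natural map `H_*^Q(G, A) → H_*(G, A)` induced by the inclusion of the
invariant subcomplex in the bar complex. -/
def iStar (n : ℕ) : HQ G A Q n →+ Hn G A n :=
  QuotientAddGroup.map _ _
    (AddSubgroup.inclusion (inf_le_left : cycQ G A Q n ≤ cyc G A n))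
    (by
      intro x hx
      rw [AddSubgroup.mem_addSubgroupOf] at hx
      obtain ⟨y, -, hy⟩ := hx
      exact ⟨y, hy⟩)

theorem tail_qsmul (q : Q) {n : ℕ} (g : Fin (n + 1) → G) :
    Fin.tail (q • g) = q • Fin.tail g := rfl

theorem init_qsmul (q : Q) {n : ℕ} (g : Fin (n + 1) → G) :
    Fin.init (q • g) = q • Fin.init g := rfl

theorem fm_qsmul (q : Q) {n : ℕ} (g : Fin (n + 1) → G) (i : Fin n) :
    fm (q • g) i = q • fm g i := by
  funext j
  simp only [fm, Pi.smul_apply]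
  split_ifs <;> simp [smul_mul']

theorem qch_single (q : Q) {n : ℕ} (g : Fin n → G) (a : A) :
    qch G A Q q n (Finsupp.single g a) = Finsupp.single (q • g) a :=
  Finsupp.mapDomain_single

theorem bd_single {n : ℕ} (g : Fin (n + 1) → G) (a : A) :
    bd G A n (Finsupp.single g a) =
      Finsupp.single (Fin.tail g) a
        + ∑ i : Fin n, ((-1 : ℤ) ^ ((i : ℕ) + 1)) • Finsupp.single (fm g i) a
        + ((-1 : ℤ) ^ (n + 1)) • Finsupp.single (Fin.init g) a := by
  simp [bd, Finsupp.liftAddHom_apply_single]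

theorem bd_qch (q : Q) (n : ℕ) :
    (bd G A n).comp (qch G A Q q (n + 1)) = (qch G A Q q n).comp (bd G A n) := by
  refine Finsupp.addHom_ext fun g a => ?_
  simp only [AddMonoidHom.comp_apply, qch_single, bd_single, map_add, map_sum, map_zsmul,
    tail_qsmul, init_qsmul, fm_qsmul]

theorem dd_qch (q : Q) (n : ℕ) :
    (dd G A n).comp (qch G A Q q n) = (qch G A Q q (n - 1)).comp (dd G A n) := by
  cases n with
  | zero => ext g a; simp [dd]
  | succ n => exact bd_qch G A Q q n

/-- The action of `q : Q` on cycles. -/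
def qcyc (q : Q) (n : ℕ) : cyc G A n →+ cyc G A n :=
  ((qch G A Q q n).comp (cyc G A n).subtype).codRestrict _ (by
    intro x
    have hx : dd G A n (x : Ch G A n) = 0 := x.2
    have := congrArg (fun f : Ch G A n →+ Ch G A (n - 1) => f (x : Ch G A n)) (dd_qch G A Q q n)
    simp only [AddMonoidHom.comp_apply] at this
    simp only [AddMonoidHom.comp_apply, AddSubgroup.coe_subtype]
    show qch G A Q q n (x : Ch G A n) ∈ cyc G A n
    have hmem : dd G A n (qch G A Q q n (x : Ch G A n)) = 0 := by
      rw [this, hx, map_zero]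
    exact hmem)

/-- The induced action of `q : Q` on the homology `Hₙ(G, A)`. -/
def qHn (q : Q) (n : ℕ) : Hn G A n →+ Hn G A n :=
  QuotientAddGroup.map _ _ (qcyc G A Q q n) (by
    intro x hx
    rw [AddSubgroup.mem_addSubgroupOf] at hx
    obtain ⟨y, hy⟩ := hx
    rw [AddSubgroup.mem_comap, AddSubgroup.mem_addSubgroupOf]
    refine ⟨qch G A Q q (n + 1) y, ?_⟩
    have := congrArg (fun f : Ch G A (n+1) →+ Ch G A n => f y) (bd_qch G A Q q n)
    simp only [AddMonoidHom.comp_apply] at this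
    show bd G A n (qch G A Q q (n+1) y) = _
    rw [this, hy]
    rfl)

/-- The subgroup of `Q`-invariant homology classes `Hₙ(G, A)^Q`. -/
def HnInv (n : ℕ) : AddSubgroup (Hn G A n) where
  carrier := { x | ∀ q : Q, qHn G A Q q n x = x }
  add_mem' := by intro a b ha hb q; rw [map_add, ha q, hb q]
  zero_mem' := fun q => map_zero _
  neg_mem' := by intro a ha q; rw [map_neg, ha q]

theorem qch_mul (q q' : Q) (n : ℕ) :
    qch G A Q (q * q') n = (qch G A Q q n).comp (qch G A Q q' n) := by
  refine Finsupp.addHom_ext fun g a => ?_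
  simp [qch_single, mul_smul]

theorem qHn_mul (q q' : Q) (n : ℕ) (x : Hn G A n) :
    qHn G A Q q n (qHn G A Q q' n x) = qHn G A Q (q * q') n x := by
  induction x using QuotientAddGroup.induction_on with
  | H z =>
    show QuotientAddGroup.mk (qcyc G A Q q n (qcyc G A Q q' n z))
      = QuotientAddGroup.mk (qcyc G A Q (q * q') n z)
    congr 1
    refine Subtype.ext ?_
    show qch G A Q q n (qch G A Q q' n (z : Ch G A n)) = qch G A Q (q * q') n (z : Ch G A n)
    rw [qch_mul]
    rfl

/-- The subgroup of `Hₙ(G, A)` generated by the elements `y - q • y`. -/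
def coinvRel (n : ℕ) : AddSubgroup (Hn G A n) :=
  AddSubgroup.closure {x | ∃ (q : Q) (y : Hn G A n), x = y - qHn G A Q q n y}

/-- The coinvariants `Hₙ(G, A)_Q` of the `Q`-action on homology. -/
def HnCoinv (n : ℕ) : Type _ := Hn G A n ⧸ coinvRel G A Q n

instance (n : ℕ) : AddCommGroup (HnCoinv G A Q n) :=
  QuotientAddGroup.Quotient.addCommGroup _

/-- The norm map `Hₙ(G, A)_Q → Hₙ(G, A)`, sending the class of `x` to `∑_{q ∈ Q} q • x`. -/
def normHn [Fintype Q] (n : ℕ) : HnCoinv G A Q n →+ Hn G A n :=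
  QuotientAddGroup.lift _ (∑ q : Q, qHn G A Q q n) (by
    rw [coinvRel, AddSubgroup.closure_le]
    rintro x ⟨q', y, rfl⟩
    simp only [SetLike.mem_coe, AddMonoidHom.mem_ker, map_sub, AddMonoidHom.finset_sum_apply]
    rw [sub_eq_zero]
    refine Fintype.sum_equiv (Equiv.mulRight q'⁻¹) _ _ fun q => ?_
    show qHn G A Q q n y = qHn G A Q (q * q'⁻¹) n (qHn G A Q q' n y)
    rw [qHn_mul, inv_mul_cancel_right])

section Norm1

variable (G : Type*) [Group G] (Q : Type*) [Group Q] [MulDistribMulAction Q G] [Fintype Q]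

/-- The `Q`-invariant `1`-chain `∑_{q ∈ Q} [q • g]` associated to `g : G`. -/
def ncyc (g : G) : Ch G ℤ 1 :=
  ∑ q : Q, Finsupp.single (fun _ : Fin 1 => q • g) (1 : ℤ)

theorem ncyc_mem (g : G) : ncyc G Q g ∈ cycQ G ℤ Q 1 := by
  constructor
  · show dd G ℤ 1 (ncyc G Q g) = 0
    show bd G ℤ 0 (ncyc G Q g) = 0
    rw [ncyc, map_sum]
    refine Finset.sum_eq_zero fun q _ => ?_
    rw [bd_single]
    have h : Fin.tail (fun _ : Fin 1 => q • g) = Fin.init (fun _ : Fin 1 => q • g) :=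
      Subsingleton.elim _ _
    simp [h]
  · intro q'
    rw [ncyc, map_sum]
    simp only [qch_single]
    refine Fintype.sum_equiv (Equiv.mulLeft q') _ _ fun q => ?_
    congr 1
    funext _
    show q' • (q • g) = (q' * q) • g
    rw [mul_smul]

/-- The norm map `N : G → H₁^Q(G, ℤ)`, sending `g` to the class of `∑_{q ∈ Q} [q • g]`. -/
def NQ (g : G) : HQ G ℤ Q 1 :=
  QuotientAddGroup.mk ⟨ncyc G Q g, ncyc_mem G Q g⟩

end Norm1

end

end InvariantHomology

namespace InvariantHomology

noncomputable section

variable (G Q M : Type*) [Group G] [Group Q] [MulDistribMulAction Q G] [AddCommGroup M]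

/-- The differential of the bar complex restricted to `Q`-invariant chains. -/
def bdInv (n : ℕ) : invCh G ℤ Q (n + 1) →+ invCh G ℤ Q n :=
  ((bd G ℤ n).comp (invCh G ℤ Q (n + 1)).subtype).codRestrict _ (by
    intro x
    intro q
    have := congrArg (fun f : Ch G ℤ (n + 1) →+ Ch G ℤ n => f (x : Ch G ℤ (n + 1)))
      (bd_qch G ℤ Q q n)
    simp only [AddMonoidHom.comp_apply] at this
    show qch G ℤ Q q n (bd G ℤ n (x : Ch G ℤ (n + 1))) = bd G ℤ n (x : Ch G ℤ (n + 1))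
    rw [← this, x.2 q])

/-- Knudson's cochains: homomorphisms on the group of `Q`-invariant chains. -/
def KC (n : ℕ) : Type _ := invCh G ℤ Q n →+ M

instance (n : ℕ) : AddCommGroup (KC G Q M n) := AddMonoidHom.instAddCommGroup

/-- The differential of Knudson's cochain complex: precomposition with the differential of
invariant chains. -/
def kd (n : ℕ) : KC G Q M n →+ KC G Q M (n + 1) where
  toFun f := f.comp (bdInv G Q n)
  map_zero' := AddMonoidHom.zero_comp _
  map_add' f₁ f₂ := AddMonoidHom.add_comp _ _ _

/-- The Knudson differential, re-indexed (zero in degree `0`). -/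
def kdd : ∀ n : ℕ, KC G Q M (n - 1) →+ KC G Q M n
  | 0 => 0
  | n + 1 => kd G Q M n

/-- Knudson's cohomology of invariant group chains `Hⁿ_Q(G, M) = Hⁿ(Hom(C_*(G)^Q, M))`. -/
def HK (n : ℕ) : Type _ :=
  (kd G Q M n).ker ⧸ ((kdd G Q M n).range.addSubgroupOf (kd G Q M n).ker)

instance (n : ℕ) : AddCommGroup (HK G Q M n) := QuotientAddGroup.Quotient.addCommGroup _

end

end InvariantHomology

/-!
With trivial coefficients, evaluating cochains on chains turns a `Q`-invariant cochain into a
homomorphism on `Q`-invariant chains, compatibly with the differentials. This restriction is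
bijective once `|Q|` is invertible in `M`: `|Q|` times an invariant chain is a combination of
norm chains `∑_q [q • g]`, on which an invariant cochain `f` takes the value `|Q| • f g`.
Hence the two cochain complexes are isomorphic, and so are their cohomology groups.
-/

namespace InvariantHomology

variable {G Q : Type*} [Group G] [Group Q] [MulDistribMulAction Q G]

theorem fm_eq_cohomology_fm {n : ℕ} (g : Fin (n + 1) → G) (i : Fin n) :
    fm g i = InvariantCohomology.fm g i := rfl

noncomputable section

variable [Fintype Q]

variable (Q) in
def normChain {n : ℕ} (g : Fin n → G) : invCh G ℤ Q n :=
  ⟨∑ q : Q, single (q • g) 1, fun q' => by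
    rw [map_sum]
    exact Fintype.sum_equiv (Equiv.mulLeft q') _ _ fun q => by
      rw [qch_single, Equiv.coe_mulLeft, mul_smul]⟩

theorem normChain_smul {n : ℕ} (q' : Q) (g : Fin n → G) :
    normChain Q (q' • g) = normChain Q g :=
  Subtype.ext <| Fintype.sum_equiv (Equiv.mulRight q') _ _ fun q => by
    rw [Equiv.coe_mulRight, mul_smul]

theorem card_smul_eq_sum_normChain {n : ℕ} (x : invCh G ℤ Q n) :
    (Fintype.card Q : ℤ) • x =
      ∑ g ∈ (x : Ch G ℤ n).support, (x : Ch G ℤ n) g • normChain Q g := by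
  apply Subtype.ext
  calc (Fintype.card Q : ℤ) • (x : Ch G ℤ n)
      = ∑ q : Q, qch G ℤ Q q n x := by simp [x.2 _]
    _ = ∑ q : Q, ∑ g ∈ (x : Ch G ℤ n).support, single (q • g) ((x : Ch G ℤ n) g) := rfl
    _ = _ := by
      rw [Finset.sum_comm]
      simp [normChain, Finset.smul_sum]

end

end InvariantHomology

namespace InvariantCohomology

open InvariantHomology

noncomputable section

variable {G Q M : Type*} [AddCommGroup M]

def pairing (n : ℕ) : Cc G M n →+ (Ch G ℤ n →+ M) :=
  LinearMap.toAddMonoidHom'.comp (Finsupp.lift M ℤ (Fin n → G)).toAddMonoidHom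

theorem pairing_single {n : ℕ} (f : Cc G M n) (g : Fin n → G) (a : ℤ) :
    pairing n f (single g a) = a • f g := by
  simp [pairing, Finsupp.lift_apply]

variable [Group G] [Group Q] [MulDistribMulAction Q G]

theorem pairing_bd [DistribMulAction G M] (hG : ∀ (g : G) (m : M), g • m = m) {n : ℕ}
    (f : Cc G M n) (x : Ch G ℤ (n + 1)) :
    pairing n f (bd G ℤ n x) = pairing (n + 1) (cb G M n f) x := by
  suffices (pairing n f).comp (bd G ℤ n) = pairing (n + 1) (cb G M n f) from
    DFunLike.congr_fun this x
  refine Finsupp.addHom_ext fun g a => ?_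
  simp only [AddMonoidHom.comp_apply, bd_single, map_add, map_sum, map_zsmul, pairing_single]
  simp [cb, hG, fm_eq_cohomology_fm, smul_add, Finset.smul_sum, smul_comm a]

variable (Q) in
def toKC (n : ℕ) : Cc G M n →+ (invCh G ℤ Q n →+ M) :=
  (AddMonoidHom.compHom' (invCh G ℤ Q n).subtype).comp (pairing n)

theorem toKC_apply {n : ℕ} (f : Cc G M n) (x : invCh G ℤ Q n) :
    toKC Q n f x = pairing n f (x : Ch G ℤ n) := rfl

theorem toKC_cb [DistribMulAction G M] (hG : ∀ (g : G) (m : M), g • m = m) {n : ℕ}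
    (f : Cc G M n) : toKC Q (n + 1) (cb G M n f) = kd G Q M n (toKC Q n f) :=
  AddMonoidHom.ext fun x => (pairing_bd hG f x).symm

theorem toKC_cdd [DistribMulAction G M] (hG : ∀ (g : G) (m : M), g • m = m) {n : ℕ}
    (f : Cc G M (n - 1)) : toKC Q n (cdd G M n f) = kdd G Q M n (toKC Q (n - 1) f) := by
  cases n with
  | zero => exact map_zero _
  | succ n => exact toKC_cb hG f

variable [DistribMulAction Q M]

theorem mem_invCc_iff (hQ : ∀ (q : Q) (m : M), q • m = m) {n : ℕ} {f : Cc G M n} :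
    f ∈ invCc G Q M n ↔ ∀ (q : Q) (g : Fin n → G), f (q • g) = f g := by
  constructor
  · intro hf q g
    simpa [qcc, hQ] using congrFun (hf q⁻¹) g
  · intro hf q
    funext g
    show q • f (q⁻¹ • g) = f g
    rw [hQ, hf]

section Fintype

variable [Fintype Q]

theorem toKC_normChain (hQ : ∀ (q : Q) (m : M), q • m = m) {n : ℕ} {f : Cc G M n}
    (hf : f ∈ invCc G Q M n) (g : Fin n → G) :
    toKC Q n f (normChain Q g) = (Fintype.card Q : ℤ) • f g := by
  simp [toKC_apply, normChain, pairing_single, (mem_invCc_iff hQ).1 hf]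

theorem toKC_injOn (hQ : ∀ (q : Q) (m : M), q • m = m)
    (hM : Function.Bijective fun m : M => (Fintype.card Q : ℤ) • m) (n : ℕ) :
    Set.InjOn (toKC Q n) (invCc G Q M n : Set (Cc G M n)) := by
  intro f hf f' hf' h
  funext g
  apply hM.1
  simpa only [toKC_normChain hQ hf, toKC_normChain hQ hf'] using
    DFunLike.congr_fun h (normChain Q g)

theorem exists_toKC_eq (hQ : ∀ (q : Q) (m : M), q • m = m)
    (hM : Function.Bijective fun m : M => (Fintype.card Q : ℤ) • m) {n : ℕ}
    (φ : invCh G ℤ Q n →+ M) : ∃ f ∈ invCc G Q M n, toKC Q n f = φ := by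
  let divCard := Equiv.ofBijective _ hM
  let f : Cc G M n := fun g => divCard.symm (φ (normChain Q g))
  have hf : f ∈ invCc G Q M n := (mem_invCc_iff hQ).2 fun q g => by simp only [f, normChain_smul]
  refine ⟨f, hf, AddMonoidHom.ext fun x => hM.1 ?_⟩
  show _ • toKC Q n f x = _ • φ x
  rw [← map_zsmul (toKC Q n f), ← map_zsmul φ, card_smul_eq_sum_normChain, map_sum, map_sum]
  refine Finset.sum_congr rfl fun g _ => ?_
  rw [map_zsmul, map_zsmul, toKC_normChain hQ hf]
  exact congrArg _ (Equiv.ofBijective_apply_symm_apply _ hM _)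

end Fintype

variable [DistribMulAction G M]

theorem cb_mem_invCc (hG : ∀ (g : G) (m : M), g • m = m) (hQ : ∀ (q : Q) (m : M), q • m = m)
    {n : ℕ} {f : Cc G M n} (hf : f ∈ invCc G Q M n) : cb G M n f ∈ invCc G Q M (n + 1) := by
  rw [mem_invCc_iff hQ] at hf ⊢
  intro q g
  simp only [cb, AddMonoidHom.coe_mk, ZeroHom.coe_mk, hG, ← fm_eq_cohomology_fm, tail_qsmul,
    init_qsmul, fm_qsmul, hf]

theorem cdd_mem_invCc (hG : ∀ (g : G) (m : M), g • m = m) (hQ : ∀ (q : Q) (m : M), q • m = m)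
    {n : ℕ} {f : Cc G M (n - 1)} (hf : f ∈ invCc G Q M (n - 1)) :
    cdd G M n f ∈ invCc G Q M n := by
  cases n with
  | zero => exact zero_mem _
  | succ n => exact cb_mem_invCc hG hQ hf

variable [Fintype Q]

theorem mem_cbdryQ_iff (hG : ∀ (g : G) (m : M), g • m = m) (hQ : ∀ (q : Q) (m : M), q • m = m)
    (hM : Function.Bijective fun m : M => (Fintype.card Q : ℤ) • m) {n : ℕ} {f : Cc G M n}
    (hf : f ∈ invCc G Q M n) : f ∈ cbdryQ G Q M n ↔ toKC Q n f ∈ (kdd G Q M n).range := by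
  constructor
  · rintro ⟨g, -, rfl⟩
    exact ⟨toKC Q (n - 1) g, (toKC_cdd hG g).symm⟩
  · rintro ⟨φ, hφ⟩
    obtain ⟨g, hg, rfl⟩ := exists_toKC_eq hQ hM φ
    exact ⟨g, hg, toKC_injOn hQ hM n (cdd_mem_invCc hG hQ hg) hf (by rw [toKC_cdd hG, hφ])⟩

variable (Q M) in
def toHK (hG : ∀ (g : G) (m : M), g • m = m) (n : ℕ) : ccycQ G Q M n →+ HK G Q M n :=
  (QuotientAddGroup.mk' _).comp <|
    ((toKC Q n).comp (ccycQ G Q M n).subtype).codRestrict _ fun f => by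
      show kd G Q M n (toKC Q n f) = 0
      rw [← toKC_cb hG, AddMonoidHom.mem_ker.1 f.2.1]
      exact map_zero _

theorem toHK_surjective (hG : ∀ (g : G) (m : M), g • m = m)
    (hQ : ∀ (q : Q) (m : M), q • m = m)
    (hM : Function.Bijective fun m : M => (Fintype.card Q : ℤ) • m) (n : ℕ) :
    Function.Surjective (toHK Q M hG n) := by
  intro y
  obtain ⟨⟨φ, hφ⟩, rfl⟩ := QuotientAddGroup.mk_surjective y
  obtain ⟨f, hf, rfl⟩ := exists_toKC_eq hQ hM φ
  have hcb : cb G M n f = 0 :=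
    toKC_injOn hQ hM (n + 1) (cb_mem_invCc hG hQ hf) (zero_mem _)
      (by rw [toKC_cb hG, map_zero]; exact hφ)
  exact ⟨⟨f, AddMonoidHom.mem_ker.2 hcb, hf⟩, rfl⟩

theorem ker_toHK (hG : ∀ (g : G) (m : M), g • m = m) (hQ : ∀ (q : Q) (m : M), q • m = m)
    (hM : Function.Bijective fun m : M => (Fintype.card Q : ℤ) • m) (n : ℕ) :
    (toHK Q M hG n).ker = (cbdryQ G Q M n).addSubgroupOf (ccycQ G Q M n) := by
  ext f
  rw [AddMonoidHom.mem_ker, AddSubgroup.mem_addSubgroupOf, mem_cbdryQ_iff hG hQ hM f.2.2]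
  exact (QuotientAddGroup.eq_zero_iff _).trans AddSubgroup.mem_addSubgroupOf

end

end InvariantCohomology

open InvariantCohomology InvariantHomology in
/-- If `M` is a trivial `Q`-`G` module and `|Q|` is invertible in `M`,
then the invariant cohomology `HHⁿ_Q(G, M)` is isomorphic to Knudson's cohomology of
invariant group chains `Hⁿ_Q(G, M)`. -/
theorem invariant_cohomology_iso_knudson
    (G Q M : Type*) [Group G] [Group Q] [MulDistribMulAction Q G]
    [AddCommGroup M] [DistribMulAction G M] [DistribMulAction Q M] [Fintype Q]
    (hGtriv : ∀ (g : G) (m : M), g • m = m)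
    (hQtriv : ∀ (q : Q) (m : M), q • m = m)
    (hM : Function.Bijective fun m : M => (Fintype.card Q : ℤ) • m) (n : ℕ) :
    Nonempty (HHQ G Q M n ≃+ HK G Q M n) :=
  ⟨(QuotientAddGroup.quotientAddEquivOfEq (ker_toHK hGtriv hQtriv hM n).symm).trans
    (QuotientAddGroup.quotientKerEquivOfSurjective _ (toHK_surjective hGtriv hQtriv hM n))⟩
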